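/- arXiv:2203.02543 — 2 statements merged into one kernel-verified Lean document; each statement's English description precedes it below -/
import Mathlib

section
/- Let d ≥ 2 and 0 < ε. Define the anisotropic Gaussian probability density g_ε(x) = ε^{d−2} (2π)^{−d/2} exp(−(x₁²/ε² + ε²(x₂² + ⋯ + x_d²))/2) on ℝ^d. Then for every unit vector ξ ∈ ℝ^d and every t ∈ ℝ, the Radon transform of g_ε is R g_ε(t, ξ) = (2π σ_ε²(ξ))^{−1/2} exp(−t²/(2 σ_ε²(ξ))), where σ_ε²(ξ) = ε² ξ₁² + (1 − ξ₁²)/ε²; i.e., each slice is a normalized one-dimensional Gaussian whose variance σ_ε²(ξ) depends on the direction ξ. -/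
/-!
On the hyperplane `x = t ξ + T y` one has `‖x‖² = t² + ‖y‖²` and `x₁ = t ξ₁ + ⟪y, u⟫` for a vector
`u` with `‖u‖² = 1 - ξ₁²`, so the exponent `ε²‖x‖² + (ε⁻² - ε²) x₁²` of `g_ε` is an isotropic
Gaussian in `y` plus a rank-one term. A reflection of `ℝ^{d-1}` turns `u` into a multiple of a
coordinate vector; the integral then factors into `d - 2` centred Gaussians of variance `ε⁻²` and
one shifted Gaussian, and completing the square in the latter produces the variance
`σ_ε²(ξ) = ε² + (ε⁻² - ε²)(1 - ξ₁²)`.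
-/

open MeasureTheory Real Filter
open scoped RealInnerProductSpace Topology

/-- The Radon transform of `f : ℝ^d → ℝ` at offset `t` and direction `ξ`, computed using a
linear isometry `T : ℝ^{d-1} → ℝ^d` that parametrizes the hyperplane through `t • ξ`
orthogonal to `ξ`: the integral of `f` over that hyperplane with respect to the pushforward
of the `(d-1)`-dimensional Lebesgue measure under `T`. -/
noncomputable def radon {d : ℕ} (f : EuclideanSpace ℝ (Fin d) → ℝ) (t : ℝ)
    (ξ : EuclideanSpace ℝ (Fin d))
    (T : EuclideanSpace ℝ (Fin (d - 1)) →ₗᵢ[ℝ] EuclideanSpace ℝ (Fin d)) : ℝ :=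
  ∫ y, f (t • ξ + T y)

/-- `T` is a valid parametrization of the hyperplane `ξ^⊥`: its range is the orthogonal
complement of the line `ℝ ∙ ξ`. -/
def IsRadonParam {d : ℕ} (ξ : EuclideanSpace ℝ (Fin d))
    (T : EuclideanSpace ℝ (Fin (d - 1)) →ₗᵢ[ℝ] EuclideanSpace ℝ (Fin d)) : Prop :=
  LinearMap.range T.toLinearMap = (ℝ ∙ ξ)ᗮ

section Hyperplane

variable {E F : Type*} [NormedAddCommGroup E] [InnerProductSpace ℝ E]
  [NormedAddCommGroup F] [InnerProductSpace ℝ F] {ξ : E} {T : F →ₗᵢ[ℝ] E}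

lemma inner_apply_eq_zero_of_range_eq (hT : LinearMap.range T.toLinearMap = (ℝ ∙ ξ)ᗮ)
    (y : F) : ⟪ξ, T y⟫ = 0 :=
  Submodule.mem_orthogonal_singleton_iff_inner_right.mp (hT ▸ LinearMap.mem_range_self _ y)

lemma norm_smul_add_apply_sq (hT : LinearMap.range T.toLinearMap = (ℝ ∙ ξ)ᗮ) (hξ : ‖ξ‖ = 1)
    (t : ℝ) (y : F) : ‖t • ξ + T y‖ ^ 2 = t ^ 2 + ‖y‖ ^ 2 := by
  rw [norm_add_sq_real, real_inner_smul_left, inner_apply_eq_zero_of_range_eq hT, norm_smul,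
    T.norm_map, hξ, Real.norm_eq_abs, mul_one, sq_abs]
  ring

/-- The functional `⟪v, T ·⟫` is represented by the preimage under `T` of the component of `v`
orthogonal to `ξ`. -/
lemma exists_inner_apply_eq_inner (hT : LinearMap.range T.toLinearMap = (ℝ ∙ ξ)ᗮ)
    (hξ : ‖ξ‖ = 1) (v : E) :
    ∃ u : F, ‖u‖ ^ 2 = ‖v‖ ^ 2 - ⟪ξ, v⟫ ^ 2 ∧ ∀ y, ⟪v, T y⟫ = ⟪u, y⟫ := by
  obtain ⟨u, hu⟩ : v - ⟪ξ, v⟫ • ξ ∈ LinearMap.range T.toLinearMap := by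
    rw [hT, Submodule.mem_orthogonal_singleton_iff_inner_right, inner_sub_right,
      real_inner_smul_right, real_inner_self_eq_norm_sq, hξ]
    ring
  rw [LinearIsometry.coe_toLinearMap] at hu
  refine ⟨u, ?_, fun y => ?_⟩
  · rw [← T.norm_map, hu, norm_sub_sq_real, real_inner_smul_right, norm_smul, hξ,
      Real.norm_eq_abs, mul_one, sq_abs, real_inner_comm]
    ring
  · rw [← T.inner_map_map, hu, inner_sub_left, real_inner_smul_left,
      inner_apply_eq_zero_of_range_eq hT, mul_zero, sub_zero]

end Hyperplane

lemma integral_exp_neg_sq_add_shifted_sq {α β : ℝ} (a c : ℝ) (hs : α + β * c ^ 2 ≠ 0) :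
    ∫ z : ℝ, exp (-(α * z ^ 2 + β * (a + c * z) ^ 2) / 2) =
      √(2 * π / (α + β * c ^ 2)) * exp (-(α * β * a ^ 2 / (α + β * c ^ 2)) / 2) := by
  set s := α + β * c ^ 2 with hs_def
  have complete_square : ∀ z, -(α * z ^ 2 + β * (a + c * z) ^ 2) / 2 =
      -(s / 2) * (z + β * a * c / s) ^ 2 + -(α * β * a ^ 2 / s) / 2 := by
    intro z
    rw [hs_def] at hs ⊢
    field_simp
    ring
  simp_rw [complete_square, exp_add]
  rw [integral_mul_const, integral_add_right_eq_self (fun z => exp (-(s / 2) * z ^ 2)),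
    integral_gaussian, div_div_eq_mul_div, mul_comm π]

lemma EuclideanSpace.integral_prod_apply {ι : Type*} [Fintype ι] (f : ι → ℝ → ℝ) :
    ∫ y : EuclideanSpace ℝ ι, ∏ i, f i (y i) = ∏ i, ∫ z, f i z := by
  rw [← (PiLp.volume_preserving_toLp ι).integral_comp
    (MeasurableEquiv.toLp 2 _).measurableEmbedding]
  exact integral_fintype_prod_eq_prod f

lemma integral_comp_norm_inner_eq_of_norm_eq {E G : Type*} [NormedAddCommGroup E]
    [InnerProductSpace ℝ E] [FiniteDimensional ℝ E] [MeasurableSpace E] [BorelSpace E]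
    [NormedAddCommGroup G] [NormedSpace ℝ G] (f : ℝ → ℝ → G) {w v : E} (h : ‖w‖ = ‖v‖) :
    ∫ y, f ‖y‖ ⟪y, w⟫ = ∫ y, f ‖y‖ ⟪y, v⟫ := by
  set Φ := Submodule.reflection (ℝ ∙ (w - v))ᗮ
  have hΦ : ∀ y, ⟪Φ y, w⟫ = ⟪y, v⟫ := fun y => by
    rw [← Submodule.reflection_sub h, ← Φ.inner_map_map, Submodule.reflection_reflection]
  rw [← Φ.measurePreserving.integral_comp Φ.toHomeomorph.measurableEmbedding]
  simp_rw [Φ.norm_map, hΦ]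

lemma integral_exp_neg_norm_sq_add_inner_sq {ι : Type*} [Fintype ι] [Nonempty ι] {α β : ℝ}
    (a : ℝ) (w : EuclideanSpace ℝ ι) (hs : α + β * ‖w‖ ^ 2 ≠ 0) :
    ∫ y : EuclideanSpace ℝ ι, exp (-(α * ‖y‖ ^ 2 + β * (a + ⟪y, w⟫) ^ 2) / 2) =
      √(2 * π / α) ^ (Fintype.card ι - 1) *
        (√(2 * π / (α + β * ‖w‖ ^ 2)) * exp (-(α * β * a ^ 2 / (α + β * ‖w‖ ^ 2)) / 2)) := by
  classical
  obtain ⟨j⟩ := ‹Nonempty ι›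
  set g : ι → ℝ → ℝ := fun i z => if i = j then exp (-(α * z ^ 2 + β * (a + ‖w‖ * z) ^ 2) / 2)
    else exp (-(α / 2) * z ^ 2) with hg
  have integrand_eq_prod : ∀ y : EuclideanSpace ℝ ι,
      exp (-(α * ‖y‖ ^ 2 + β * (a + ⟪y, EuclideanSpace.single j ‖w‖⟫) ^ 2) / 2) =
        ∏ i, g i (y i) := by
    intro y
    rw [Fintype.prod_eq_mul_prod_compl j,
      Finset.prod_congr rfl (fun i hi => if_neg (by simpa using hi))]
    simp only [hg, ↓reduceIte]
    rw [← exp_sum, ← exp_add, EuclideanSpace.real_norm_sq_eq, Fintype.sum_eq_add_sum_compl j,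
      EuclideanSpace.inner_single_right]
    simp only [neg_mul, Finset.sum_neg_distrib, ← Finset.mul_sum, conj_trivial]
    ring_nf
  have integral_g : ∀ i, ∫ z, g i z =
      if i = j then √(2 * π / (α + β * ‖w‖ ^ 2)) * exp (-(α * β * a ^ 2 / (α + β * ‖w‖ ^ 2)) / 2)
      else √(2 * π / α) := by
    intro i
    split_ifs with hij
    · simp only [hg, if_pos hij]
      exact integral_exp_neg_sq_add_shifted_sq a ‖w‖ hs
    · simp only [hg, if_neg hij]
      rw [integral_gaussian, div_div_eq_mul_div, mul_comm π]
  rw [integral_comp_norm_inner_eq_of_norm_eq (fun r s => exp (-(α * r ^ 2 + β * (a + s) ^ 2) / 2))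
      (by rw [PiLp.norm_single, norm_norm] : ‖w‖ = ‖EuclideanSpace.single j ‖w‖‖),
    integral_congr_ae (.of_forall integrand_eq_prod), EuclideanSpace.integral_prod_apply,
    Fintype.prod_eq_mul_prod_compl j, integral_g, if_pos rfl,
    Finset.prod_congr rfl (fun i hi => (integral_g i).trans (if_neg (by simpa using hi))),
    Finset.prod_const, Finset.card_compl, Finset.card_singleton, mul_comm]

/-- The variance `σ_ε²(ξ)` of the Radon slices, as a function of `c = ξ₁`. -/
noncomputable def sliceVariance (ε c : ℝ) : ℝ := ε ^ 2 * c ^ 2 + (1 - c ^ 2) / ε ^ 2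

lemma sliceVariance_pos {ε c : ℝ} (hε : ε ≠ 0) (hc : c ^ 2 ≤ 1) : 0 < sliceVariance ε c := by
  rcases hc.lt_or_eq with hc | hc
  · have : 0 < (1 - c ^ 2) / ε ^ 2 := div_pos (sub_pos.2 hc) (by positivity)
    exact add_pos_of_nonneg_of_pos (by positivity) this
  · simp only [sliceVariance, hc, sub_self, zero_div, add_zero, mul_one]
    positivity

theorem integral_exp_anisotropic_smul_add_apply {ι E : Type*} [Fintype ι] [Nonempty ι]
    [NormedAddCommGroup E] [InnerProductSpace ℝ E] {ξ e : E}
    {T : EuclideanSpace ℝ ι →ₗᵢ[ℝ] E} (hT : LinearMap.range T.toLinearMap = (ℝ ∙ ξ)ᗮ)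
    (hξ : ‖ξ‖ = 1) (he : ‖e‖ = 1) {ε : ℝ} (hε : ε ≠ 0) (t : ℝ) :
    ∫ y, exp (-(ε ^ 2 * ‖t • ξ + T y‖ ^ 2 + (1 / ε ^ 2 - ε ^ 2) * ⟪e, t • ξ + T y⟫ ^ 2) / 2) =
      √(2 * π / ε ^ 2) ^ (Fintype.card ι - 1) *
        (√(2 * π / sliceVariance ε ⟪e, ξ⟫) * exp (-t ^ 2 / (2 * sliceVariance ε ⟪e, ξ⟫))) := by
  obtain ⟨u, hu, hTu⟩ := exists_inner_apply_eq_inner hT hξ e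
  rw [he, one_pow, real_inner_comm] at hu
  set c := ⟪e, ξ⟫
  have hσ : ε ^ 2 + (1 / ε ^ 2 - ε ^ 2) * ‖u‖ ^ 2 = sliceVariance ε c := by
    rw [hu, sliceVariance]
    field_simp
    ring
  have hσ_pos : 0 < sliceVariance ε c := sliceVariance_pos hε (by nlinarith [sq_nonneg ‖u‖])
  have integrand : ∀ y,
      -(ε ^ 2 * ‖t • ξ + T y‖ ^ 2 + (1 / ε ^ 2 - ε ^ 2) * ⟪e, t • ξ + T y⟫ ^ 2) / 2 =
        -(ε ^ 2 * t ^ 2) / 2 +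
          -(ε ^ 2 * ‖y‖ ^ 2 + (1 / ε ^ 2 - ε ^ 2) * (t * c + ⟪y, u⟫) ^ 2) / 2 := by
    intro y
    rw [norm_smul_add_apply_sq hT hξ, inner_add_right, real_inner_smul_right, hTu,
      real_inner_comm u]
    ring
  have hexp : -(ε ^ 2 * t ^ 2) / 2 +
      -(ε ^ 2 * (1 / ε ^ 2 - ε ^ 2) * (t * c) ^ 2 / sliceVariance ε c) / 2 =
        -t ^ 2 / (2 * sliceVariance ε c) := by
    field_simp
    rw [sliceVariance]
    field_simp
    ring
  simp_rw [integrand, exp_add]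
  rw [integral_const_mul, integral_exp_neg_norm_sq_add_inner_sq _ _ (hσ.trans_ne hσ_pos.ne'), hσ,
    ← hexp, exp_add]
  ring

lemma prefactor_mul_sqrt_pow_mul_sqrt_eq_rpow {d : ℕ} (hd : 2 ≤ d) {ε σ : ℝ} (hε : 0 < ε)
    (hσ : 0 < σ) :
    ε ^ (d - 2) * (2 * π) ^ (-(d : ℝ) / 2) * √(2 * π / ε ^ 2) ^ (d - 2) * √(2 * π / σ) =
      (2 * π * σ) ^ (-(1 : ℝ) / 2) := by
  have h2π : 0 < 2 * π := by positivity
  have hsq : √(2 * π) ^ d = √(2 * π) ^ (d - 2) * (2 * π) := by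
    rw [← pow_sub_mul_pow _ hd, sq_sqrt h2π.le]
  rw [rpow_div_two_eq_sqrt _ h2π.le, rpow_div_two_eq_sqrt _ (by positivity),
    rpow_neg (sqrt_nonneg _), rpow_natCast, rpow_neg_one, sqrt_div' _ (by positivity),
    sqrt_div' _ hσ.le, sqrt_sq hε.le, sqrt_mul h2π.le, hsq, div_pow]
  have : 0 < √σ := sqrt_pos.2 hσ
  have : 0 < √(2 * π) := sqrt_pos.2 h2π
  field_simp
  rw [sq_sqrt h2π.le]

/-- Eqs. (4.5)–(4.8): the Radon transform of the anisotropic Gaussian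
`g_ε(x) = ε^{d-2} (2π)^{-d/2} exp(-(x₁²/ε² + ε²(x₂²+⋯+x_d²))/2)` is, in each direction `ξ`,
the normalized 1D Gaussian of variance `σ_ε²(ξ) = ε²ξ₁² + (1-ξ₁²)/ε²`. -/
theorem statement7 (d : ℕ) (hd : 2 ≤ d) (ε : ℝ) (hε : 0 < ε)
    (ξ : EuclideanSpace ℝ (Fin d)) (hξ : ‖ξ‖ = 1)
    (T : EuclideanSpace ℝ (Fin (d - 1)) →ₗᵢ[ℝ] EuclideanSpace ℝ (Fin d))
    (hT : IsRadonParam ξ T) (t : ℝ) :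
    radon (fun x => ε ^ (d - 2) * (2 * π) ^ (-(d : ℝ) / 2) *
        Real.exp (-((x (⟨0, by omega⟩ : Fin d)) ^ 2 / ε ^ 2 +
          ε ^ 2 * ∑ i ∈ Finset.univ.filter (fun i : Fin d => i ≠ ⟨0, by omega⟩),
            (x i) ^ 2) / 2)) t ξ T =
      (2 * π * (ε ^ 2 * (ξ (⟨0, by omega⟩ : Fin d)) ^ 2 +
          (1 - (ξ (⟨0, by omega⟩ : Fin d)) ^ 2) / ε ^ 2)) ^ (-(1 : ℝ) / 2) *
        Real.exp (-t ^ 2 / (2 * (ε ^ 2 * (ξ (⟨0, by omega⟩ : Fin d)) ^ 2 +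
          (1 - (ξ (⟨0, by omega⟩ : Fin d)) ^ 2) / ε ^ 2))) := by
  set i₀ : Fin d := ⟨0, by omega⟩
  have : Nonempty (Fin (d - 1)) := ⟨⟨0, by omega⟩⟩
  have hcoord : ∀ x : EuclideanSpace ℝ (Fin d), ⟪EuclideanSpace.single i₀ 1, x⟫ = x i₀ := by
    simp [EuclideanSpace.inner_single_left]
  have exponent : ∀ x : EuclideanSpace ℝ (Fin d),
      x i₀ ^ 2 / ε ^ 2 + ε ^ 2 * ∑ i ∈ Finset.univ.filter (· ≠ i₀), x i ^ 2 =
        ε ^ 2 * ‖x‖ ^ 2 + (1 / ε ^ 2 - ε ^ 2) * ⟪EuclideanSpace.single i₀ 1, x⟫ ^ 2 := by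
    intro x
    rw [Finset.filter_ne', Finset.sum_erase_eq_sub (Finset.mem_univ i₀),
      ← EuclideanSpace.real_norm_sq_eq, hcoord]
    field_simp
    ring
  have hσ_pos : 0 < sliceVariance ε (ξ i₀) := sliceVariance_pos hε.ne' (by
    simpa [← hcoord, hξ] using abs_real_inner_le_norm (EuclideanSpace.single i₀ 1) ξ)
  simp_rw [radon, exponent]
  rw [integral_const_mul, integral_exp_anisotropic_smul_add_apply hT hξ (by simp) hε.ne',
    hcoord, Fintype.card_fin, show d - 1 - 1 = d - 2 by omega, ← mul_assoc, ← mul_assoc,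
    prefactor_mul_sqrt_pow_mul_sqrt_eq_rpow hd hε hσ_pos]
  rfl
end

section
/- Let κ ∈ 𝓢(ℝ) be an even Schwartz function with ∫_ℝ κ(s) ds = 1. For a ∈ ℝ define h_a : ℝ → ℝ by h_a(t) = ½|t − a| − ½ ∫_ℝ κ(s) |t − s| ds + (a/2) ∫_ℝ κ(s) sign(t − s) ds. Then: (i) each h_a is continuous on ℝ; (ii) h_a(t) → 0 as t → +∞ and as t → −∞; and (iii) there is a constant C, depending only on κ, such that sup_{t∈ℝ} |h_a(t)| ≤ C (1 + |a|) for every a ∈ ℝ. -/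
/-!
Since `∫ κ = 1`, the three terms of `h_a(t)` combine into the single integral
`½ ∫ κ(s) φ_a(t, s) ds` with `φ_a(t, s) = |t - a| - |t - s| + a sign(t - s)`. The integrand is
dominated by `|κ(s)| (|s| + 2|a|)`, which is integrable and independent of `t`; this gives the
bound `C (1 + |a|)`, and dominated convergence gives the rest: `φ_a(·, s)` is continuous away
from `t = s`, a null set, and equals `s` for large `t` and `-s` for very negative `t`, so both
limits are `±½ ∫ s κ(s) ds`, which vanishes because `κ` is even.
-/

open MeasureTheory Filter
open scoped Topology

/-- The corrected kernel profile of Eq. (6.13) of the paper (with `a = ξᵀx`):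
`h_a(t) = ½|t-a| - ½∫κ(s)|t-s|ds + (a/2)∫κ(s) sign(t-s) ds`. -/
noncomputable def hker (κ : ℝ → ℝ) (a t : ℝ) : ℝ :=
  (1 / 2) * |t - a| - (1 / 2) * (∫ s : ℝ, κ s * |t - s|) +
    (a / 2) * ∫ s : ℝ, κ s * Real.sign (t - s)

@[fun_prop]
lemma Real.measurable_sign : Measurable Real.sign :=
  measurable_const.ite measurableSet_Iio (measurable_const.ite measurableSet_Ioi measurable_const)

lemma Real.abs_sign_le_one (x : ℝ) : |Real.sign x| ≤ 1 := by
  rcases Real.sign_apply_eq x with h | h | h <;> simp [h]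

noncomputable def hkerIntegrand (a t s : ℝ) : ℝ :=
  |t - a| - |t - s| + a * Real.sign (t - s)

lemma measurable_hkerIntegrand (a t : ℝ) : Measurable (hkerIntegrand a t) := by
  unfold hkerIntegrand
  fun_prop

lemma abs_hkerIntegrand_le (a t s : ℝ) : |hkerIntegrand a t s| ≤ |s| + 2 * |a| := by
  have h_abs : |(|t - a| - |t - s|)| ≤ |s| + |a| :=
    calc |(|t - a| - |t - s|)| ≤ |(t - a) - (t - s)| := abs_abs_sub_abs_le_abs_sub _ _
      _ = |s - a| := by ring_nf
      _ ≤ |s| + |a| := abs_sub _ _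
  have h_sign : |a * Real.sign (t - s)| ≤ |a| := by
    rw [abs_mul]
    exact mul_le_of_le_one_right (abs_nonneg a) (Real.abs_sign_le_one _)
  calc |hkerIntegrand a t s| ≤ |(|t - a| - |t - s|)| + |a * Real.sign (t - s)| := abs_add_le _ _
    _ ≤ |s| + 2 * |a| := by linarith

lemma hkerIntegrand_eventuallyEq_atTop (a s : ℝ) :
    (hkerIntegrand a · s) =ᶠ[atTop] fun _ => s := by
  filter_upwards [eventually_ge_atTop a, eventually_gt_atTop s] with t hat hst
  rw [hkerIntegrand, abs_of_nonneg (sub_nonneg.2 hat), abs_of_pos (sub_pos.2 hst),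
    Real.sign_of_pos (sub_pos.2 hst)]
  ring

lemma hkerIntegrand_eventuallyEq_atBot (a s : ℝ) :
    (hkerIntegrand a · s) =ᶠ[atBot] fun _ => -s := by
  filter_upwards [eventually_le_atBot a, eventually_lt_atBot s] with t hta hts
  rw [hkerIntegrand, abs_of_nonpos (sub_nonpos.2 hta), abs_of_neg (sub_neg.2 hts),
    Real.sign_of_neg (sub_neg.2 hts)]
  ring

lemma continuousAt_hkerIntegrand (a : ℝ) {t s : ℝ} (hts : t ≠ s) :
    ContinuousAt (hkerIntegrand a · s) t := by
  have h_sign : ContinuousAt (fun u => Real.sign (u - s)) t := by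
    rcases hts.lt_or_gt with hts | hts
    · refine (continuousAt_const (y := (-1 : ℝ))).congr ?_
      filter_upwards [Iio_mem_nhds hts] with u hu
      rw [Real.sign_of_neg (sub_neg.2 hu)]
    · refine (continuousAt_const (y := (1 : ℝ))).congr ?_
      filter_upwards [Ioi_mem_nhds hts] with u hu
      rw [Real.sign_of_pos (sub_pos.2 hu)]
  unfold hkerIntegrand
  fun_prop

section Integrals

variable {κ : ℝ → ℝ}

lemma integrable_mul_abs_sub (hκ : Integrable κ) (hκ₁ : Integrable fun s => s * κ s) (t : ℝ) :
    Integrable fun s => κ s * |t - s| := by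
  refine (hκ₁.abs.add (hκ.abs.const_mul |t|)).mono'
    (hκ.aestronglyMeasurable.mul (by fun_prop)) (ae_of_all _ fun s => ?_)
  simp only [Real.norm_eq_abs, abs_mul, abs_abs, Pi.add_apply]
  nlinarith [abs_sub t s, abs_nonneg (κ s)]

lemma integrable_mul_sign_sub (hκ : Integrable κ) (t : ℝ) :
    Integrable fun s => κ s * Real.sign (t - s) :=
  hκ.mul_bdd (Real.measurable_sign.comp (measurable_const.sub measurable_id)).aestronglyMeasurable
    (ae_of_all _ fun _ => Real.abs_sign_le_one _)

lemma norm_mul_hkerIntegrand_le (a t s : ℝ) :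
    ‖κ s * hkerIntegrand a t s‖ ≤ |s * κ s| + 2 * |a| * |κ s| := by
  rw [Real.norm_eq_abs, abs_mul, abs_mul]
  nlinarith [abs_hkerIntegrand_le a t s, abs_nonneg (κ s)]

lemma integrable_hkerIntegrand_bound (hκ : Integrable κ) (hκ₁ : Integrable fun s => s * κ s)
    (a : ℝ) : Integrable fun s => |s * κ s| + 2 * |a| * |κ s| :=
  hκ₁.abs.add (hκ.abs.const_mul _)

lemma integrable_mul_hkerIntegrand (hκ : Integrable κ) (hκ₁ : Integrable fun s => s * κ s)
    (a t : ℝ) : Integrable fun s => κ s * hkerIntegrand a t s :=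
  (integrable_hkerIntegrand_bound hκ hκ₁ a).mono'
    (hκ.aestronglyMeasurable.mul (measurable_hkerIntegrand a t).aestronglyMeasurable)
    (ae_of_all _ (norm_mul_hkerIntegrand_le a t))

lemma hker_eq_half_integral (hκ : Integrable κ) (hκ₁ : Integrable fun s => s * κ s)
    (hint : ∫ s, κ s = 1) (a : ℝ) :
    hker κ a = fun t => (1 / 2) * ∫ s, κ s * hkerIntegrand a t s := by
  funext t
  have h_split : (fun s => κ s * hkerIntegrand a t s) =
      fun s => (κ s * |t - a| - κ s * |t - s|) + a * (κ s * Real.sign (t - s)) := by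
    funext s
    rw [hkerIntegrand]
    ring
  have h_abs : Integrable fun s => κ s * |t - a| - κ s * |t - s| :=
    (hκ.mul_const _).sub (integrable_mul_abs_sub hκ hκ₁ t)
  have h_sign : Integrable fun s => a * (κ s * Real.sign (t - s)) :=
    (integrable_mul_sign_sub hκ t).const_mul a
  rw [h_split, integral_add h_abs h_sign,
    integral_sub (hκ.mul_const _) (integrable_mul_abs_sub hκ hκ₁ t), integral_mul_const,
    integral_const_mul, hint, hker]
  ring

lemma continuous_integral_mul_hkerIntegrand (hκ : Integrable κ)
    (hκ₁ : Integrable fun s => s * κ s) (a : ℝ) :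
    Continuous fun t => ∫ s, κ s * hkerIntegrand a t s := by
  refine continuous_iff_continuousAt.2 fun t => continuousAt_of_dominated
    (Eventually.of_forall fun t => (integrable_mul_hkerIntegrand hκ hκ₁ a t).aestronglyMeasurable)
    (Eventually.of_forall fun t => ae_of_all _ (norm_mul_hkerIntegrand_le a t))
    (integrable_hkerIntegrand_bound hκ hκ₁ a) ?_
  filter_upwards [Measure.ae_ne volume t] with s hst
  exact continuousAt_const.mul (continuousAt_hkerIntegrand a hst.symm)

lemma tendsto_integral_mul_hkerIntegrand_atTop (hκ : Integrable κ)
    (hκ₁ : Integrable fun s => s * κ s) (a : ℝ) :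
    Tendsto (fun t => ∫ s, κ s * hkerIntegrand a t s) atTop (𝓝 (∫ s, s * κ s)) := by
  refine tendsto_integral_filter_of_dominated_convergence _
    (Eventually.of_forall fun t => (integrable_mul_hkerIntegrand hκ hκ₁ a t).aestronglyMeasurable)
    (Eventually.of_forall fun t => ae_of_all _ (norm_mul_hkerIntegrand_le a t))
    (integrable_hkerIntegrand_bound hκ hκ₁ a) (ae_of_all _ fun s => ?_)
  refine tendsto_const_nhds.congr' ?_
  filter_upwards [hkerIntegrand_eventuallyEq_atTop a s] with t ht
  rw [ht, mul_comm]

lemma tendsto_integral_mul_hkerIntegrand_atBot (hκ : Integrable κ)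
    (hκ₁ : Integrable fun s => s * κ s) (a : ℝ) :
    Tendsto (fun t => ∫ s, κ s * hkerIntegrand a t s) atBot (𝓝 (-∫ s, s * κ s)) := by
  rw [← integral_neg]
  refine tendsto_integral_filter_of_dominated_convergence _
    (Eventually.of_forall fun t => (integrable_mul_hkerIntegrand hκ hκ₁ a t).aestronglyMeasurable)
    (Eventually.of_forall fun t => ae_of_all _ (norm_mul_hkerIntegrand_le a t))
    (integrable_hkerIntegrand_bound hκ hκ₁ a) (ae_of_all _ fun s => ?_)
  refine tendsto_const_nhds.congr' ?_
  filter_upwards [hkerIntegrand_eventuallyEq_atBot a s] with t ht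
  rw [ht]
  ring

lemma abs_integral_mul_hkerIntegrand_le (hκ : Integrable κ) (hκ₁ : Integrable fun s => s * κ s)
    (a t : ℝ) :
    |∫ s, κ s * hkerIntegrand a t s| ≤ (∫ s, |s * κ s|) + 2 * |a| * ∫ s, |κ s| := by
  rw [← integral_const_mul, ← integral_add hκ₁.abs (hκ.abs.const_mul _), ← Real.norm_eq_abs]
  exact norm_integral_le_of_norm_le (integrable_hkerIntegrand_bound hκ hκ₁ a)
    (ae_of_all _ (norm_mul_hkerIntegrand_le a t))

lemma integral_id_mul_eq_zero_of_even (heven : ∀ s, κ (-s) = κ s) :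
    ∫ s, s * κ s = 0 := by
  have h := integral_neg_eq_self (fun s => s * κ s) volume
  simp only [heven, neg_mul, integral_neg] at h
  linarith

end Integrals

/-- Section 6.2: for an even Schwartz function `κ` of total integral 1, the
corrected kernel profile `h_a` is continuous, vanishes at `±∞`, and is uniformly bounded by
`C(1+|a|)` with `C` depending only on `κ`. -/
theorem statement15 (κ : SchwartzMap ℝ ℝ) (heven : ∀ s : ℝ, κ (-s) = κ s)
    (hint : (∫ s : ℝ, κ s) = 1) :
    (∀ a : ℝ, Continuous (hker (⇑κ) a)) ∧
    (∀ a : ℝ, Tendsto (hker (⇑κ) a) atTop (𝓝 0) ∧ Tendsto (hker (⇑κ) a) atBot (𝓝 0)) ∧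
    ∃ C : ℝ, ∀ a t : ℝ, |hker (⇑κ) a t| ≤ C * (1 + |a|) := by
  have hκ : Integrable κ := κ.integrable
  have hκ₁ : Integrable fun s => s * κ s :=
    (κ.integrable_pow_mul volume 1).mono' (by fun_prop) (ae_of_all _ fun s => by simp)
  have hmoment := integral_id_mul_eq_zero_of_even heven
  simp only [hker_eq_half_integral hκ hκ₁ hint]
  refine ⟨fun a => continuous_const.mul (continuous_integral_mul_hkerIntegrand hκ hκ₁ a),
    fun a => ⟨?_, ?_⟩, ⟨(1 / 2) * (∫ s, |s * κ s|) + ∫ s, |κ s|, fun a t => ?_⟩⟩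
  · simpa only [hmoment, neg_zero, mul_zero] using
      (tendsto_integral_mul_hkerIntegrand_atTop hκ hκ₁ a).const_mul (1 / 2)
  · simpa only [hmoment, neg_zero, mul_zero] using
      (tendsto_integral_mul_hkerIntegrand_atBot hκ hκ₁ a).const_mul (1 / 2)
  · have h_int := abs_integral_mul_hkerIntegrand_le hκ hκ₁ a t
    have hM₀ : 0 ≤ ∫ s, |κ s| := integral_nonneg fun s => abs_nonneg _
    have hM₁ : 0 ≤ ∫ s, |s * κ s| := integral_nonneg fun s => abs_nonneg _
    rw [abs_mul, abs_of_pos one_half_pos]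
    nlinarith [abs_nonneg a]
end
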